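/- arXiv:1805.03469 — 6 statements merged into one kernel-verified Lean document; each statement's English description precedes it below -/
import Mathlib

section
/- Let μ be a complex measure on 𝔻. The function w ↦ w·P_{μ̄}(w) belongs to the Bloch space ℬ if and only if sup_{w∈𝔻} |∫_𝔻 (1-|w|²)/(1 - w̄ z)² dμ(z)| < ∞. -/
/-!
Differentiating under the integral sign, which is legitimate because `‖1 - u z̄‖ ≥ 1 - ‖u‖ ‖z‖`
bounds the kernel uniformly for `u` near a point of the disk, the derivative of `u ↦ u P_{μ̄}(u)`
is `∫ (1 - u z̄)⁻² dμ̄(z)`, the complex conjugate of `∫ (1 - ū z)⁻² dμ(z)`. So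
`(1 - |w|²) |(w P_{μ̄})'(w)|` is exactly the quantity whose supremum is taken on the right.
-/

open MeasureTheory Complex Metric

/-- `f` belongs to the Bloch space of the unit disk. -/
def MemBloch (f : ℂ → ℂ) : Prop :=
  DifferentiableOn ℂ f (Metric.ball 0 1) ∧
    ∃ C : ℝ, ∀ z ∈ Metric.ball (0 : ℂ) 1, (1 - ‖z‖ ^ 2) * ‖deriv f z‖ ≤ C

open ComplexConjugate

lemma one_sub_le_norm_one_sub_mul {R : Type*} [NormedRing R] [NormOneClass R] {s : ℝ} {x y : R}
    (hx : ‖x‖ ≤ s) (hy : ‖y‖ ≤ 1) : 1 - s ≤ ‖1 - x * y‖ :=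
  calc 1 - s ≤ ‖(1 : R)‖ - ‖x * y‖ := by
        rw [norm_one]
        nlinarith [norm_mul_le x y, norm_nonneg x, norm_nonneg y]
    _ ≤ ‖1 - x * y‖ := norm_sub_norm_le _ _

lemma hasDerivAt_mul_inv_one_sub_mul {𝕜 : Type*} [NontriviallyNormedField 𝕜] {c x : 𝕜}
    (hx : 1 - x * c ≠ 0) :
    HasDerivAt (fun x => x * (1 - x * c)⁻¹) ((1 - x * c) ^ 2)⁻¹ x := by
  have hinv : HasDerivAt (fun x => (1 - x * c)⁻¹) (-(-c) / (1 - x * c) ^ 2) x :=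
    ((hasDerivAt_mul_const c).const_sub 1).inv hx
  refine ((hasDerivAt_id' x).mul hinv).congr_deriv ?_
  field_simp
  ring

theorem hasDerivAt_mul_integral_inv_one_sub_mul_conj {ν : Measure ℂ} {g : ℂ → ℂ}
    (hsupp : ∀ᵐ z ∂ν, ‖z‖ ≤ 1) (hg : Integrable g ν) {u₀ : ℂ} (hu₀ : ‖u₀‖ < 1) :
    HasDerivAt (fun u => u * ∫ z, (1 - u * conj z)⁻¹ * g z ∂ν)
      (∫ z, ((1 - u₀ * conj z) ^ 2)⁻¹ * g z ∂ν) u₀ := by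
  set ε : ℝ := (1 - ‖u₀‖) / 2
  set s : ℝ := ‖u₀‖ + ε
  have hs : 1 - s = ε := by ring
  have hε : 0 < ε := by linarith
  have hball : ∀ x ∈ ball u₀ ε, ‖x‖ ≤ s := fun x hx => by
    linarith [norm_le_norm_add_norm_sub' x u₀, mem_ball_iff_norm.mp hx]
  have hlower : ∀ x ∈ ball u₀ ε, ∀ z : ℂ, ‖z‖ ≤ 1 → ε ≤ ‖1 - x * conj z‖ := fun x hx z hz =>
    hs ▸ one_sub_le_norm_one_sub_mul (hball x hx) (by rwa [RCLike.norm_conj])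
  have hne : ∀ x ∈ ball u₀ ε, ∀ z : ℂ, ‖z‖ ≤ 1 → 1 - x * conj z ≠ 0 := fun x hx z hz =>
    norm_ne_zero_iff.mp (hε.trans_le (hlower x hx z hz)).ne'
  have hmeas : ∀ x : ℂ, AEStronglyMeasurable (fun z => (1 - x * conj z)⁻¹ * g z) ν := fun x =>
    (by fun_prop : Measurable fun z : ℂ => (1 - x * conj z)⁻¹).aestronglyMeasurable.mul
      hg.aestronglyMeasurable
  have hint : Integrable (fun z => (1 - u₀ * conj z)⁻¹ * g z) ν := by
    refine hg.bdd_mul (c := ε⁻¹) (by fun_prop) ?_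
    filter_upwards [hsupp] with z hz
    rw [norm_inv]
    exact inv_anti₀ hε (hlower u₀ (mem_ball_self hε) z hz)
  have hderiv := hasDerivAt_integral_of_dominated_loc_of_deriv_le
    (F := fun x z => x * ((1 - x * conj z)⁻¹ * g z))
    (F' := fun x z => ((1 - x * conj z) ^ 2)⁻¹ * g z) (bound := fun z => (ε⁻¹) ^ 2 * ‖g z‖)
    (ball_mem_nhds u₀ hε) (.of_forall fun x => (hmeas x).const_mul x) (hint.const_mul u₀)
    (by fun_prop) ?_ (hg.norm.const_mul _) ?_
  · simpa only [integral_const_mul] using hderiv.2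
  · filter_upwards [hsupp] with z hz x hx
    rw [norm_mul, norm_inv, norm_pow, ← inv_pow]
    gcongr
    exact hlower x hx z hz
  · filter_upwards [hsupp] with z hz x hx
    simpa only [mul_assoc] using
      (hasDerivAt_mul_inv_one_sub_mul (hne x hx z hz)).mul_const (g z)

lemma integral_div_sq_mul_eq_mul_conj_integral {ν : Measure ℂ} (h : ℂ → ℂ) (c w : ℂ) :
    ∫ z, (c / (1 - conj w * z) ^ 2) * h z ∂ν
      = c * conj (∫ z, ((1 - w * conj z) ^ 2)⁻¹ * conj (h z) ∂ν) := by
  rw [← integral_conj, ← integral_const_mul]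
  simp only [map_mul, map_inv₀, map_pow, map_sub, map_one, conj_conj, div_eq_mul_inv, mul_assoc]

theorem statement2_general (ν : Measure ℂ) (h : ℂ → ℂ)
    (hsupp : ∀ᵐ z ∂ν, z ∈ Metric.ball (0 : ℂ) 1)
    (hint : Integrable h ν) :
    MemBloch (fun u : ℂ =>
        u * ∫ z, (1 - u * (starRingEnd ℂ) z)⁻¹ * (starRingEnd ℂ) (h z) ∂ν)
      ↔ ∃ C : ℝ, ∀ w ∈ Metric.ball (0 : ℂ) 1,
          ‖∫ z, (((1 - ‖w‖ ^ 2 : ℝ) : ℂ) / (1 - (starRingEnd ℂ) w * z) ^ 2) * h z ∂ν‖ ≤ C := by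
  set Φ := fun u : ℂ => u * ∫ z, (1 - u * conj z)⁻¹ * conj (h z) ∂ν
  have hsupp' : ∀ᵐ z ∂ν, ‖z‖ ≤ 1 := hsupp.mono fun z hz => (mem_ball_zero_iff.mp hz).le
  have hint' : Integrable (fun z => conj (h z)) ν := (conjCLE : ℂ →L[ℝ] ℂ).integrable_comp hint
  have hderiv : ∀ w ∈ ball (0 : ℂ) 1,
      HasDerivAt Φ (∫ z, ((1 - w * conj z) ^ 2)⁻¹ * conj (h z) ∂ν) w := fun w hw =>
    hasDerivAt_mul_integral_inv_one_sub_mul_conj hsupp' hint' (mem_ball_zero_iff.mp hw)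
  have hnorm : ∀ w ∈ ball (0 : ℂ) 1,
      ‖∫ z, (((1 - ‖w‖ ^ 2 : ℝ) : ℂ) / (1 - conj w * z) ^ 2) * h z ∂ν‖
        = (1 - ‖w‖ ^ 2) * ‖deriv Φ w‖ := fun w hw => by
    have hw1 : ‖w‖ ≤ 1 := (mem_ball_zero_iff.mp hw).le
    rw [integral_div_sq_mul_eq_mul_conj_integral, (hderiv w hw).deriv, norm_mul, norm_real,
      RCLike.norm_conj, Real.norm_of_nonneg (by nlinarith [norm_nonneg w])]
  refine ⟨fun ⟨_, C, hC⟩ => ⟨C, fun w hw => hnorm w hw ▸ hC w hw⟩, fun ⟨C, hC⟩ => ⟨?_, C, ?_⟩⟩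
  · exact fun w hw => (hderiv w hw).differentiableAt.differentiableWithinAt
  · exact fun w hw => hnorm w hw ▸ hC w hw

/-- For a complex measure `μ` on `𝔻` represented as `dμ = h dν`
(`ν` finite positive, so `dμ̄ = conj h dν`), the function `w ↦ w·P_{μ̄}(w)` belongs to
the Bloch space iff `sup_{w∈𝔻} |∫_𝔻 (1-|w|²)/(1-w̄z)² dμ(z)| < ∞`. -/
theorem statement2 (ν : Measure ℂ) [IsFiniteMeasure ν] (h : ℂ → ℂ)
    (hsupp : ∀ᵐ z ∂ν, z ∈ Metric.ball (0 : ℂ) 1)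
    (hint : Integrable h ν) :
    MemBloch (fun u : ℂ =>
        u * ∫ z, (1 - u * (starRingEnd ℂ) z)⁻¹ * (starRingEnd ℂ) (h z) ∂ν)
      ↔ ∃ C : ℝ, ∀ w ∈ Metric.ball (0 : ℂ) 1,
          ‖∫ z, (((1 - ‖w‖ ^ 2 : ℝ) : ℂ) / (1 - (starRingEnd ℂ) w * z) ^ 2) * h z ∂ν‖ ≤ C :=
  statement2_general ν h hsupp hint
end

section
/- Let f(z) = ∑_{k=1}^∞ a_k z^{n_k} be analytic on 𝔻 where n_{k+1} ≥ λ n_k for some λ > 1 and all k. Then f belongs to the Bloch space if and only if the sequence (a_k) is bounded. -/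
/-!
If `|a_k| ≤ M`, then `|f'(z)| ≤ M ∑ n_k r^(n_k - 1)` with `r = |z|`, and lacunarity bounds this sum
by `λ/(λ-1) · 1/(1-r)`: the term `n_k r^(n_k - 1)` is dominated by the block `n_{k-1} ≤ j < n_k` of
the geometric series `∑ r^j`, which has at least `(1 - 1/λ) n_k` terms, each `≥ r^(n_k - 1)`.
Conversely, for any Bloch function Cauchy's estimate for `f'` on the circle of radius
`1 - 1/(2N)` bounds the `N`-th Taylor coefficient by `4C`; for `f` this coefficient is `a_k` when
`N = n_k`.
-/

open MeasureTheory Complex Metric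

open scoped NNReal

lemma mul_pow_pred_le_sum_Ico {r : ℝ} (h0 : 0 ≤ r) (h1 : r ≤ 1) {m N : ℕ} (hmN : m ≤ N) :
    ((N : ℝ) - m) * r ^ (N - 1) ≤ ∑ j ∈ Finset.Ico m N, r ^ j := by
  have key := Finset.card_nsmul_le_sum (Finset.Ico m N) (r ^ ·) (r ^ (N - 1)) fun j hj =>
    pow_le_pow_of_le_one h0 h1 (by have := (Finset.mem_Ico.mp hj).2; omega)
  rwa [nsmul_eq_mul, Nat.card_Ico, Nat.cast_sub hmN] at key

section LacunarySum

variable {n : ℕ → ℕ} {lam : ℝ}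

lemma sum_range_succ_mul_pow_le_of_lacunary (hlam : 1 < lam)
    (hlac : ∀ k, lam * (n k : ℝ) ≤ n (k + 1)) {r : ℝ} (h0 : 0 ≤ r) (h1 : r ≤ 1) (K : ℕ) :
    ∑ k ∈ Finset.range (K + 1), (n k : ℝ) * r ^ (n k - 1)
      ≤ lam / (lam - 1) * ∑ j ∈ Finset.range (n K), r ^ j := by
  have hc : 1 ≤ lam / (lam - 1) := by rw [le_div_iff₀ (by linarith)]; linarith
  induction K with
  | zero =>
    have hbase := mul_pow_pred_le_sum_Ico h0 h1 (Nat.zero_le (n 0))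
    rw [Nat.cast_zero, sub_zero, ← Finset.range_eq_Ico] at hbase
    rw [Finset.sum_range_one]
    exact hbase.trans (le_mul_of_one_le_left (Finset.sum_nonneg fun j _ => pow_nonneg h0 j) hc)
  | succ K ih =>
    have hle : n K ≤ n (K + 1) := by
      have := hlac K
      exact_mod_cast (le_mul_of_one_le_left (Nat.cast_nonneg _) hlam.le).trans this
    have hgap : (n (K + 1) : ℝ) ≤ lam / (lam - 1) * ((n (K + 1) : ℝ) - n K) := by
      rw [div_mul_eq_mul_div, le_div_iff₀ (by linarith)]
      nlinarith [hlac K]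
    have hblock : (n (K + 1) : ℝ) * r ^ (n (K + 1) - 1)
        ≤ lam / (lam - 1) * ∑ j ∈ Finset.Ico (n K) (n (K + 1)), r ^ j :=
      calc (n (K + 1) : ℝ) * r ^ (n (K + 1) - 1)
          ≤ lam / (lam - 1) * ((n (K + 1) : ℝ) - n K) * r ^ (n (K + 1) - 1) := by
            gcongr
        _ ≤ lam / (lam - 1) * ∑ j ∈ Finset.Ico (n K) (n (K + 1)), r ^ j := by
            rw [mul_assoc]
            gcongr
            exact mul_pow_pred_le_sum_Ico h0 h1 hle
    rw [Finset.sum_range_succ, ← Finset.sum_range_add_sum_Ico _ hle, mul_add]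
    exact add_le_add ih hblock

lemma sum_range_mul_pow_le_of_lacunary (hlam : 1 < lam)
    (hlac : ∀ k, lam * (n k : ℝ) ≤ n (k + 1)) {r : ℝ} (h0 : 0 ≤ r) (h1 : r < 1) (K : ℕ) :
    ∑ k ∈ Finset.range K, (n k : ℝ) * r ^ (n k - 1) ≤ lam / (lam - 1) * (1 - r)⁻¹ := by
  have hc : 0 ≤ lam / (lam - 1) := div_nonneg (by linarith) (by linarith)
  cases K with
  | zero => simpa using mul_nonneg hc (inv_nonneg.mpr (sub_nonneg.mpr h1.le))
  | succ K =>
    refine (sum_range_succ_mul_pow_le_of_lacunary hlam hlac h0 h1.le K).trans ?_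
    gcongr
    simpa [← Finset.range_eq_Ico] using geom_sum_Ico_le_of_lt_one (m := 0) (n := n K) h0 h1

lemma summable_mul_pow_of_lacunary (hlam : 1 < lam)
    (hlac : ∀ k, lam * (n k : ℝ) ≤ n (k + 1)) {r : ℝ} (h0 : 0 ≤ r) (h1 : r < 1) :
    Summable fun k => (n k : ℝ) * r ^ (n k - 1) :=
  summable_of_sum_range_le (fun k => by positivity)
    (sum_range_mul_pow_le_of_lacunary hlam hlac h0 h1)

lemma tsum_mul_pow_le_of_lacunary (hlam : 1 < lam)
    (hlac : ∀ k, lam * (n k : ℝ) ≤ n (k + 1)) {r : ℝ} (h0 : 0 ≤ r) (h1 : r < 1) :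
    ∑' k, (n k : ℝ) * r ^ (n k - 1) ≤ lam / (lam - 1) * (1 - r)⁻¹ :=
  Real.tsum_le_of_sum_range_le (fun k => by positivity)
    (sum_range_mul_pow_le_of_lacunary hlam hlac h0 h1)

end LacunarySum

lemma hasDerivAt_tsum_mul_pow {a : ℕ → ℂ} {e : ℕ → ℕ} {M ρ : ℝ} (hM : ∀ k, ‖a k‖ ≤ M)
    (hρ : Summable fun k => (e k : ℝ) * ρ ^ (e k - 1)) {z : ℂ} (hz : ‖z‖ < ρ)
    (hsum : Summable fun k => a k * z ^ e k) :
    HasDerivAt (fun w => ∑' k, a k * w ^ e k) (∑' k, a k * (e k * z ^ (e k - 1))) z := by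
  have hbound : ∀ k, ∀ w ∈ ball (0 : ℂ) ρ,
      ‖a k * (e k * w ^ (e k - 1))‖ ≤ M * ((e k : ℝ) * ρ ^ (e k - 1)) := by
    intro k w hw
    rw [mem_ball_zero_iff] at hw
    rw [norm_mul, norm_mul, norm_pow, Complex.norm_natCast]
    gcongr
    exacts [(norm_nonneg _).trans (hM k), hM k]
  exact hasDerivAt_tsum_of_isPreconnected (hρ.mul_left M) isOpen_ball
    (convex_ball 0 ρ).isPreconnected (fun k w _ => (hasDerivAt_pow (e k) w).const_mul (a k))
    hbound (mem_ball_zero_iff.mpr hz) hsum (mem_ball_zero_iff.mpr hz)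

lemma hasSum_extend_mul_pow_iff {R : Type*} [Semiring R] [TopologicalSpace R] {e : ℕ → ℕ}
    (he : e.Injective) (a : ℕ → R) (z s : R) :
    HasSum (fun m => Function.extend e a 0 m * z ^ m) s ↔ HasSum (fun k => a k * z ^ e k) s := by
  rw [← he.hasSum_iff fun m hm => by rw [Function.extend_apply' _ _ _ (by simpa using hm)]; simp]
  simp only [Function.comp_def, he.extend_apply]

lemma hasFPowerSeriesOnBall_ofScalars_of_hasSum {c : ℕ → ℂ} {g : ℂ → ℂ} {R : ℝ≥0} (hR : 0 < R)
    (hg : ∀ z ∈ ball (0 : ℂ) R, HasSum (fun m => c m * z ^ m) (g z)) :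
    HasFPowerSeriesOnBall g (FormalMultilinearSeries.ofScalars ℂ c) 0 R := by
  have hrad : (R : ENNReal) ≤ (FormalMultilinearSeries.ofScalars ℂ c).radius := by
    refine ENNReal.le_of_forall_nnreal_lt fun ρ hρ => ?_
    have hρR : ((ρ : ℝ) : ℂ) ∈ ball (0 : ℂ) R := by simpa using (show ρ < R by exact_mod_cast hρ)
    obtain ⟨B, hB⟩ := (hg _ hρR).summable.tendsto_atTop_zero.norm.bddAbove_range
    refine FormalMultilinearSeries.le_radius_of_bound _ B fun m => ?_
    simpa [FormalMultilinearSeries.ofScalars_norm] using hB (Set.mem_range_self m)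
  refine ⟨hrad, by exact_mod_cast hR, fun {y} hy => ?_⟩
  rw [Metric.eball_coe] at hy
  simpa [FormalMultilinearSeries.ofScalars_apply_eq, mul_comm] using hg y hy

lemma iteratedDeriv_eq_factorial_mul_of_hasFPowerSeriesAt {𝕜 : Type*} [NontriviallyNormedField 𝕜]
    [CompleteSpace 𝕜] [CharZero 𝕜] {c : ℕ → 𝕜} {g : 𝕜 → 𝕜} {x : 𝕜}
    (h : HasFPowerSeriesAt g (FormalMultilinearSeries.ofScalars 𝕜 c) x) (m : ℕ) :
    iteratedDeriv m g x = m.factorial * c m := by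
  have hc := congr_fun (FormalMultilinearSeries.ofScalars_series_injective 𝕜 𝕜
    (h.analyticAt.hasFPowerSeriesAt.eq_formalMultilinearSeries h)) m
  rw [← hc, mul_div_cancel₀ _ (by exact_mod_cast m.factorial_ne_zero)]

/-- Cauchy's estimate for `deriv g` on the circle of radius `r = 1 - 1/(2(m+1))`, where the Bloch
bound gives `‖deriv g‖ ≤ 2(m+1)C` and Bernoulli's inequality gives `r ^ m ≥ 1/2`. -/
lemma norm_iteratedDeriv_succ_le_of_bloch {g : ℂ → ℂ} (hg : DifferentiableOn ℂ g (ball 0 1))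
    {C : ℝ} (hC : ∀ z ∈ ball (0 : ℂ) 1, (1 - ‖z‖ ^ 2) * ‖deriv g z‖ ≤ C) (m : ℕ) :
    ‖iteratedDeriv (m + 1) g 0‖ ≤ 4 * C * (m + 1).factorial := by
  have hC0 : 0 ≤ C := by
    have := hC 0 (mem_ball_self one_pos)
    rw [norm_zero, zero_pow two_ne_zero, sub_zero, one_mul] at this
    exact (norm_nonneg _).trans this
  set x : ℝ := 1 / (2 * (m + 1)) with hx
  have hx0 : 0 < x := by positivity
  have hxm : x * (2 * (m + 1)) = 1 := by rw [hx]; field_simp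
  set r := 1 - x
  have hr0 : 0 < r := by
    have : x ≤ 1 / 2 := by rw [hx]; gcongr; linarith
    linarith
  have hr1 : r < 1 := by linarith
  have hg' : DifferentiableOn ℂ (deriv g) (closure (ball 0 r)) :=
    (hg.analyticOnNhd isOpen_ball).deriv.differentiableOn.mono
      (closure_ball (0 : ℂ) hr0.ne' ▸ closedBall_subset_ball hr1)
  have hsphere : ∀ z ∈ sphere (0 : ℂ) r, ‖deriv g z‖ ≤ 2 * (m + 1) * C := by
    intro z hz
    rw [mem_sphere_zero_iff_norm] at hz
    have hbloch := hC z (mem_ball_zero_iff.mpr (hz ▸ hr1))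
    rw [hz] at hbloch
    have : x * ‖deriv g z‖ ≤ C :=
      (mul_le_mul_of_nonneg_right (by nlinarith) (norm_nonneg _)).trans hbloch
    nlinarith
  have hbern : 1 / 2 ≤ r ^ m :=
    calc 1 / 2 ≤ 1 + m * -x := by linarith
      _ ≤ (1 + -x) ^ m := one_add_mul_le_pow (by linarith) m
      _ = r ^ m := by rw [← sub_eq_add_neg]
  calc ‖iteratedDeriv (m + 1) g 0‖ = ‖iteratedDeriv m (deriv g) 0‖ := by rw [iteratedDeriv_succ']
    _ ≤ m.factorial * (2 * (m + 1) * C) / r ^ m :=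
      norm_iteratedDeriv_le_of_forall_mem_sphere_norm_le m hr0 hg'.diffContOnCl hsphere
    _ ≤ m.factorial * (2 * (m + 1) * C) / (1 / 2) := by gcongr
    _ = 4 * C * (m + 1).factorial := by push_cast [Nat.factorial_succ]; ring

section Lacunary

variable {a : ℕ → ℂ} {n : ℕ → ℕ} {lam : ℝ} {f : ℂ → ℂ}

lemma strictMono_of_lacunary (hlam : 1 < lam) (hpos : ∀ k, 0 < n k)
    (hlac : ∀ k, lam * (n k : ℝ) ≤ n (k + 1)) : StrictMono n :=
  strictMono_nat_of_lt_succ fun k => by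
    have hk : (0 : ℝ) < n k := by exact_mod_cast hpos k
    exact_mod_cast (lt_mul_of_one_lt_left hk hlam).trans_le (hlac k)

lemma hasDerivAt_of_lacunary_of_bounded (hlam : 1 < lam) (hlac : ∀ k, lam * (n k : ℝ) ≤ n (k + 1))
    (hf : ∀ z ∈ ball (0 : ℂ) 1, HasSum (fun k => a k * z ^ n k) (f z))
    {M : ℝ} (hM : ∀ k, ‖a k‖ ≤ M) {z : ℂ} (hz : z ∈ ball (0 : ℂ) 1) :
    HasDerivAt f (∑' k, a k * (n k * z ^ (n k - 1))) z := by
  have hz1 : ‖z‖ < 1 := mem_ball_zero_iff.mp hz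
  have hfeq : f =ᶠ[nhds z] fun w => ∑' k, a k * w ^ n k := by
    filter_upwards [isOpen_ball.mem_nhds hz] with w hw using (hf w hw).tsum_eq.symm
  have hsummable := summable_mul_pow_of_lacunary hlam hlac (r := (1 + ‖z‖) / 2)
    (by positivity) (by linarith)
  exact (hasDerivAt_tsum_mul_pow hM hsummable (by linarith) (hf z hz).summable)
    |>.congr_of_eventuallyEq hfeq

lemma norm_tsum_mul_pow_le_of_lacunary (hlam : 1 < lam) (hlac : ∀ k, lam * (n k : ℝ) ≤ n (k + 1))
    {M : ℝ} (hM : ∀ k, ‖a k‖ ≤ M) {z : ℂ} (hz : ‖z‖ < 1) :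
    ‖∑' k, a k * (n k * z ^ (n k - 1))‖ ≤ M * (lam / (lam - 1) * (1 - ‖z‖)⁻¹) := by
  have hM0 : 0 ≤ M := (norm_nonneg _).trans (hM 0)
  calc ‖∑' k, a k * (n k * z ^ (n k - 1))‖ ≤ ∑' k, M * ((n k : ℝ) * ‖z‖ ^ (n k - 1)) := by
        have hsum := summable_mul_pow_of_lacunary hlam hlac (norm_nonneg z) hz
        refine tsum_of_norm_bounded (hsum.mul_left M).hasSum fun k => ?_
        rw [norm_mul, norm_mul, norm_pow, Complex.norm_natCast]
        gcongr
        exact hM k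
    _ = M * ∑' k, (n k : ℝ) * ‖z‖ ^ (n k - 1) := tsum_mul_left
    _ ≤ M * (lam / (lam - 1) * (1 - ‖z‖)⁻¹) := by
        gcongr
        exact tsum_mul_pow_le_of_lacunary hlam hlac (norm_nonneg z) hz

lemma memBloch_of_lacunary_of_bounded (hlam : 1 < lam) (hlac : ∀ k, lam * (n k : ℝ) ≤ n (k + 1))
    (hf : ∀ z ∈ ball (0 : ℂ) 1, HasSum (fun k => a k * z ^ n k) (f z))
    {M : ℝ} (hM : ∀ k, ‖a k‖ ≤ M) : MemBloch f := by
  have hM0 : 0 ≤ M := (norm_nonneg _).trans (hM 0)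
  refine ⟨fun z hz => (hasDerivAt_of_lacunary_of_bounded hlam hlac hf hM hz).differentiableAt
    |>.differentiableWithinAt, 2 * (M * (lam / (lam - 1))), fun z hz => ?_⟩
  have hz1 : ‖z‖ < 1 := mem_ball_zero_iff.mp hz
  rw [(hasDerivAt_of_lacunary_of_bounded hlam hlac hf hM hz).deriv]
  calc (1 - ‖z‖ ^ 2) * ‖∑' k, a k * (n k * z ^ (n k - 1))‖
      ≤ (1 - ‖z‖ ^ 2) * (M * (lam / (lam - 1) * (1 - ‖z‖)⁻¹)) := by
        gcongr
        · nlinarith [norm_nonneg z]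
        · exact norm_tsum_mul_pow_le_of_lacunary hlam hlac hM hz1
    _ = (1 + ‖z‖) * (M * (lam / (lam - 1))) := by
        field_simp [(sub_pos.mpr hz1).ne']
        ring
    _ ≤ 2 * (M * (lam / (lam - 1))) := by gcongr; linarith

lemma bounded_of_lacunary_of_memBloch (hlam : 1 < lam) (hpos : ∀ k, 0 < n k)
    (hlac : ∀ k, lam * (n k : ℝ) ≤ n (k + 1))
    (hf : ∀ z ∈ ball (0 : ℂ) 1, HasSum (fun k => a k * z ^ n k) (f z)) (hbloch : MemBloch f) :
    ∃ M : ℝ, ∀ k, ‖a k‖ ≤ M := by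
  obtain ⟨hd, C, hC⟩ := hbloch
  have hinj := (strictMono_of_lacunary hlam hpos hlac).injective
  have hps : HasFPowerSeriesOnBall f
      (FormalMultilinearSeries.ofScalars ℂ (Function.extend n a 0)) 0 (1 : ℝ≥0) :=
    hasFPowerSeriesOnBall_ofScalars_of_hasSum one_pos fun z hz =>
      (hasSum_extend_mul_pow_iff hinj a z (f z)).mpr (hf z (by simpa using hz))
  refine ⟨4 * C, fun k => ?_⟩
  obtain ⟨m, hm⟩ : ∃ m, n k = m + 1 := Nat.exists_eq_add_one.mpr (hpos k)
  have hcoeff := norm_iteratedDeriv_succ_le_of_bloch hd hC m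
  rw [← hm, iteratedDeriv_eq_factorial_mul_of_hasFPowerSeriesAt hps.hasFPowerSeriesAt,
    hinj.extend_apply, norm_mul, Complex.norm_natCast, mul_comm] at hcoeff
  exact le_of_mul_le_mul_right hcoeff (by exact_mod_cast Nat.factorial_pos _)

end Lacunary

/-- A lacunary series `f(z) = ∑ aₖ z^{nₖ}` (with `n_{k+1} ≥ λ nₖ`, `λ > 1`)
analytic on `𝔻` belongs to the Bloch space iff the coefficient sequence `(aₖ)` is bounded. -/
theorem statement5 (a : ℕ → ℂ) (n : ℕ → ℕ) (lam : ℝ) (hlam : 1 < lam)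
    (hpos : ∀ k, 0 < n k)
    (hlac : ∀ k, lam * (n k : ℝ) ≤ (n (k + 1) : ℝ))
    (f : ℂ → ℂ)
    (hf : ∀ z ∈ Metric.ball (0 : ℂ) 1, HasSum (fun k => a k * z ^ n k) (f z)) :
    MemBloch f ↔ ∃ M : ℝ, ∀ k, ‖a k‖ ≤ M :=
  ⟨bounded_of_lacunary_of_memBloch hlam hpos hlac hf,
    fun ⟨_, hM⟩ => memBloch_of_lacunary_of_bounded hlam hlac hf hM⟩
end

section
/- Let f(z) = ∑_{n=0}^∞ a_n z^n with (a_n) nonincreasing and nonnegative. If a_n = O(1/n), then f belongs to the Bloch space. -/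
open MeasureTheory Complex Metric

/-- If `f(z) = ∑ aₙ zⁿ` with `(aₙ)` nonincreasing and nonnegative, and
`aₙ = O(1/n)`, then `f` belongs to the Bloch space. -/
theorem statement12 (a : ℕ → ℝ) (hmono : Antitone a) (hpos : ∀ n, 0 ≤ a n)
    (hO : ∃ C : ℝ, ∀ n : ℕ, (n : ℝ) * a n ≤ C) :
    MemBloch (fun z : ℂ => ∑' n : ℕ, (a n : ℂ) * z ^ n) := by
  obtain ⟨C, hC⟩ := hO
  have hC0 : 0 ≤ C := le_trans (by simpa using hpos 1) (by simpa using hC 1)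
  -- termwise bound
  have hbound : ∀ (n : ℕ) (y : ℂ) (r : ℝ), ‖y‖ ≤ r →
      ‖(a n : ℂ) * ((n : ℂ) * y ^ (n - 1))‖ ≤ C * r ^ (n - 1) := by
    intro n y r hy
    have hr0 : 0 ≤ r := le_trans (norm_nonneg y) hy
    have : ‖(a n : ℂ) * ((n : ℂ) * y ^ (n - 1))‖
        = ((n : ℝ) * a n) * ‖y‖ ^ (n - 1) := by
      simp only [norm_mul, norm_pow, Complex.norm_real, Complex.norm_natCast]
      rw [Real.norm_eq_abs, _root_.abs_of_nonneg (hpos n)]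
      ring
    rw [this]
    exact mul_le_mul (hC n) (pow_le_pow_left₀ (norm_nonneg y) hy _)
      (pow_nonneg (norm_nonneg y) _) hC0
  -- derivative at each point of the unit ball
  have key : ∀ z : ℂ, ‖z‖ < 1 →
      HasDerivAt (fun z : ℂ => ∑' n : ℕ, (a n : ℂ) * z ^ n)
        (∑' n : ℕ, (a n : ℂ) * ((n : ℂ) * z ^ (n - 1))) z := by
    intro z hz
    set r : ℝ := (1 + ‖z‖) / 2 with hr
    have hz0 : 0 ≤ ‖z‖ := norm_nonneg z
    have hr0 : 0 < r := by positivity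
    have hr1 : r < 1 := by rw [hr]; linarith
    have hzr : ‖z‖ < r := by rw [hr]; linarith
    have hu : Summable (fun n : ℕ => C * r ^ (n - 1)) := by
      rw [← summable_nat_add_iff 1]
      simpa using (summable_geometric_of_lt_one hr0.le hr1).mul_left C
    have h0mem : (0 : ℂ) ∈ ball (0 : ℂ) r := mem_ball_self hr0
    have hsum0 : Summable fun n : ℕ => (a n : ℂ) * (0 : ℂ) ^ n := by
      apply summable_of_ne_finset_zero (s := {0})
      intro n hn
      simp at hn
      simp [zero_pow hn]
    exact hasDerivAt_tsum_of_isPreconnected hu isOpen_ball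
      ((convex_ball (0 : ℂ) r).isPreconnected)
      (fun n y _ => (hasDerivAt_pow n y).const_mul ((a n : ℂ)))
      (fun n y hy => hbound n y r (le_of_lt (mem_ball_zero_iff.mp hy)))
      h0mem hsum0 (mem_ball_zero_iff.mpr hzr)
  constructor
  · intro z hz
    exact ((key z (mem_ball_zero_iff.mp hz)).differentiableAt).differentiableWithinAt
  · refine ⟨3 * C, fun z hz => ?_⟩
    have hz1 : ‖z‖ < 1 := mem_ball_zero_iff.mp hz
    have hz0 : 0 ≤ ‖z‖ := norm_nonneg z
    have hderiv : deriv (fun z : ℂ => ∑' n : ℕ, (a n : ℂ) * z ^ n) z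
        = ∑' n : ℕ, (a n : ℂ) * ((n : ℂ) * z ^ (n - 1)) := (key z hz1).deriv
    set s := ‖z‖ with hs
    have hgeom : HasSum (fun n : ℕ => C * s ^ (n - 1)) (C * (1 - s)⁻¹ + C) := by
      have h1 : HasSum (fun n : ℕ => C * s ^ n) (C * (1 - s)⁻¹) :=
        (hasSum_geometric_of_lt_one hz0 hz1).mul_left C
      have h2 : HasSum (fun n : ℕ => C * s ^ ((n + 1) - 1)) (C * (1 - s)⁻¹) := by
        simpa using h1
      have := (hasSum_nat_add_iff (f := fun n : ℕ => C * s ^ (n - 1)) 1).mp h2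
      simpa using this
    have hnorm : ‖∑' n : ℕ, (a n : ℂ) * ((n : ℂ) * z ^ (n - 1))‖
        ≤ C * (1 - s)⁻¹ + C :=
      tsum_of_norm_bounded hgeom (fun n => hbound n z s le_rfl)
    rw [hderiv]
    have hinv : (1 - s) * (1 - s)⁻¹ = 1 := mul_inv_cancel₀ (by linarith)
    have hfac : 0 < 1 - s ^ 2 := by nlinarith
    calc (1 - s ^ 2) * ‖∑' n : ℕ, (a n : ℂ) * ((n : ℂ) * z ^ (n - 1))‖
        ≤ (1 - s ^ 2) * (C * (1 - s)⁻¹ + C) := by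
          exact mul_le_mul_of_nonneg_left hnorm hfac.le
      _ ≤ 3 * C := by nlinarith [hinv, inv_nonneg.mpr (by linarith : (0:ℝ) ≤ 1 - s), mul_nonneg hC0 hz0]
end

section
/- Let μ be a positive Borel measure on [0,1). Then sup_{w∈𝔻} |∫_0^1 (1-|w|²)/(1 - w̄ t)² dμ(t)| < ∞ if and only if μ[n] = O(1/n), where μ[n] = ∫_0^1 t^n dμ(t). -/
open MeasureTheory Complex Metric

/-!
Both conditions are controlled by the real function `B r = ∫ (1 - r²) / (1 - r t)² dμ(t)`,
`0 ≤ r < 1`: since `|1 - w̄ t| ≥ 1 - |w| t`, the complex integral at `w` is bounded by `B |w|`, and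
at real `w = r` it equals `B r`. Expanding `(1 - r t)⁻² = ∑ (n + 1) rⁿ tⁿ` gives
`B r = (1 - r²) ∑ (n + 1) rⁿ μ[n] ≤ (1 + r) sup (n + 1) μ[n]`. Conversely, at `r = 1 - 1/n` the
kernel dominates `n tⁿ / 4` on `[0, 1]` (from `tⁿ ≤ exp (-n (1 - t))`), so `n μ[n] ≤ 4 B (1 - 1/n)`.
-/

/-- `diskKernel r t` is the integrand `(1 - |w|²) / (1 - w̄ t)²` at a real point `w = r`. -/
noncomputable def diskKernel (r t : ℝ) : ℝ := (1 - r ^ 2) / (1 - r * t) ^ 2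

lemma diskKernel_nonneg {r : ℝ} (hr : |r| ≤ 1) (t : ℝ) : 0 ≤ diskKernel r t :=
  div_nonneg (sub_nonneg.2 ((sq_le_one_iff_abs_le_one r).2 hr)) (sq_nonneg _)

section Pointwise

variable {r t : ℝ}

lemma diskKernel_le (hr0 : 0 ≤ r) (hr1 : r < 1) (ht : t ∈ Set.Icc (0 : ℝ) 1) :
    diskKernel r t ≤ (1 - r ^ 2) / (1 - r) ^ 2 := by
  have hrt : 1 - r ≤ 1 - r * t := by nlinarith [ht.2]
  exact div_le_div_of_nonneg_left (by nlinarith) (by nlinarith)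
    (pow_le_pow_left₀ (by linarith) hrt 2)

lemma one_add_sq_le_four_mul_exp {s : ℝ} (hs : -1 ≤ s) : (1 + s) ^ 2 ≤ 4 * Real.exp s := by
  have h : 1 + s / 2 ≤ Real.exp (s / 2) := by linarith [Real.add_one_le_exp (s / 2)]
  calc (1 + s) ^ 2 ≤ (2 * (1 + s / 2)) ^ 2 := pow_le_pow_left₀ (by linarith) (by linarith) 2
    _ ≤ (2 * Real.exp (s / 2)) ^ 2 := pow_le_pow_left₀ (by linarith) (by linarith) 2
    _ = 4 * Real.exp s := by rw [mul_pow, sq (Real.exp _), ← Real.exp_add]; norm_num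

lemma pow_le_exp_neg_mul_one_sub (ht : 0 ≤ t) (n : ℕ) : t ^ n ≤ Real.exp (-(n * (1 - t))) := by
  calc t ^ n ≤ Real.exp (t - 1) ^ n :=
        pow_le_pow_left₀ ht (by linarith [Real.add_one_le_exp (t - 1)]) n
    _ = Real.exp (-(n * (1 - t))) := by rw [← Real.exp_nat_mul]; ring_nf

/-- With `r = 1 - 1/n` one has `n (1 - r t) ≤ 1 + n (1 - t)` and `n (1 - r²) ≥ 1`, so the claim
reduces to `t ^ n (1 + n (1 - t))² ≤ 4`. -/
lemma nat_mul_pow_le_diskKernel {n : ℕ} (hn : n ≠ 0) (ht : t ∈ Set.Icc (0 : ℝ) 1) :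
    n * t ^ n ≤ 4 * diskKernel (1 - 1 / n) t := by
  have hN : (1 : ℝ) ≤ n := by exact_mod_cast Nat.one_le_iff_ne_zero.2 hn
  have hN0 : (0 : ℝ) < n := by linarith
  set s : ℝ := n * (1 - t)
  have hs : 0 ≤ s := mul_nonneg hN0.le (by linarith [ht.2])
  have hden : n * (1 - (1 - 1 / n) * t) = s + t := by simp only [s]; field_simp; ring
  have hnum : 1 ≤ n * (1 - (1 - 1 / (n : ℝ)) ^ 2) := by
    rw [show n * (1 - (1 - 1 / (n : ℝ)) ^ 2) = 2 - 1 / n by field_simp; ring]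
    linarith [(div_le_one hN0).2 hN]
  have hpow : t ^ n * (1 + s) ^ 2 ≤ 4 := by
    calc t ^ n * (1 + s) ^ 2 ≤ Real.exp (-s) * (4 * Real.exp s) :=
          mul_le_mul (pow_le_exp_neg_mul_one_sub ht.1 n) (one_add_sq_le_four_mul_exp (by linarith))
            (sq_nonneg _) (Real.exp_nonneg _)
      _ = 4 := by rw [mul_left_comm, ← Real.exp_add]; simp
  have hD : 0 < 1 - (1 - 1 / (n : ℝ)) * t := by
    have hu : 0 < 1 / (n : ℝ) := by positivity
    nlinarith [mul_nonneg (sub_nonneg.2 ht.2) (sub_nonneg.2 ((div_le_one hN0).2 hN))]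
  rw [diskKernel, mul_div_assoc', le_div_iff₀ (by positivity)]
  refine le_of_mul_le_mul_left ?_ hN0
  calc (n : ℝ) * (n * t ^ n * (1 - (1 - 1 / n) * t) ^ 2)
      = t ^ n * (n * (1 - (1 - 1 / n) * t)) ^ 2 := by ring
    _ ≤ t ^ n * (1 + s) ^ 2 := by
        rw [hden]
        exact mul_le_mul_of_nonneg_left
          (pow_le_pow_left₀ (by linarith [ht.1]) (by linarith [ht.2]) 2) (pow_nonneg ht.1 n)
    _ ≤ 4 * (n * (1 - (1 - 1 / (n : ℝ)) ^ 2)) := by linarith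
    _ = n * (4 * (1 - (1 - 1 / n) ^ 2)) := by ring

end Pointwise

lemma hasSum_diskKernel {r t : ℝ} (h : |r * t| < 1) :
    HasSum (fun n : ℕ => (1 - r ^ 2) * (n + 1) * r ^ n * t ^ n) (diskKernel r t) := by
  have h1 := (hasSum_choose_mul_geometric_of_norm_lt_one (𝕜 := ℝ) 1 (r := r * t)
    (by rwa [Real.norm_eq_abs])).mul_left (1 - r ^ 2)
  have hcoeff : (fun n : ℕ => (1 - r ^ 2) * (n + 1) * r ^ n * t ^ n)
      = fun n => (1 - r ^ 2) * (((n + 1).choose 1 : ℕ) * (r * t) ^ n) := by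
    ext n; rw [Nat.choose_one_right]; push_cast; ring
  rw [hcoeff, diskKernel, div_eq_mul_one_div]
  exact h1

lemma integral_kernel_ofReal (μ : Measure ℝ) (r : ℝ) :
    ∫ t, (((1 - ‖(r : ℂ)‖ ^ 2 : ℝ) : ℂ) / (1 - (starRingEnd ℂ) r * (t : ℂ)) ^ 2) ∂μ
      = ((∫ t, diskKernel r t ∂μ : ℝ) : ℂ) := by
  refine (integral_congr_ae (Filter.Eventually.of_forall fun t => ?_)).trans integral_complex_ofReal
  simp only [diskKernel, Complex.conj_ofReal, Complex.norm_real, Real.norm_eq_abs, sq_abs]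
  push_cast; ring

section Measure

variable {μ : Measure ℝ} [IsFiniteMeasure μ]

lemma integrable_pow_of_ae_mem_Icc (hμ : ∀ᵐ t ∂μ, t ∈ Set.Icc (0 : ℝ) 1) (n : ℕ) :
    Integrable (fun t => t ^ n) μ :=
  .of_bound (continuous_pow n).aestronglyMeasurable 1 <| hμ.mono fun t ht => by
    rw [norm_pow, Real.norm_of_nonneg ht.1]; exact pow_le_one₀ ht.1 ht.2

lemma integrable_diskKernel (hμ : ∀ᵐ t ∂μ, t ∈ Set.Icc (0 : ℝ) 1) {r : ℝ} (hr0 : 0 ≤ r)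
    (hr1 : r < 1) : Integrable (diskKernel r) μ :=
  .of_bound (Measurable.aestronglyMeasurable (by unfold diskKernel; fun_prop)) _ <|
    hμ.mono fun t ht => by
    rw [Real.norm_of_nonneg (diskKernel_nonneg (abs_le.2 ⟨by linarith, hr1.le⟩) t)]
    exact diskKernel_le hr0 hr1 ht

lemma moment_le_measureReal (hμ : ∀ᵐ t ∂μ, t ∈ Set.Icc (0 : ℝ) 1) (n : ℕ) :
    ∫ t, t ^ n ∂μ ≤ μ.real Set.univ := by
  simpa using integral_mono_ae (integrable_pow_of_ae_mem_Icc hμ n) (integrable_const 1)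
    (hμ.mono fun t ht => pow_le_one₀ ht.1 ht.2)

lemma nat_mul_moment_le_of_integral_diskKernel_le (hμ : ∀ᵐ t ∂μ, t ∈ Set.Icc (0 : ℝ) 1) {C : ℝ}
    (hC : ∀ r, 0 ≤ r → r < 1 → ∫ t, diskKernel r t ∂μ ≤ C) (n : ℕ) :
    n * ∫ t, t ^ n ∂μ ≤ 4 * C := by
  rcases eq_or_ne n 0 with rfl | hn
  · have := (integral_nonneg (diskKernel_nonneg (r := 0) (by simp))).trans (hC 0 le_rfl one_pos)
    rw [Nat.cast_zero, zero_mul]; linarith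
  have hN : (1 : ℝ) ≤ n := by exact_mod_cast Nat.one_le_iff_ne_zero.2 hn
  have hr0 : (0 : ℝ) ≤ 1 - 1 / n := by linarith [(div_le_one (by linarith)).2 hN]
  have hr1 : 1 - 1 / (n : ℝ) < 1 := by linarith [(one_div_pos.2 (by linarith : (0 : ℝ) < n))]
  rw [← integral_const_mul]
  calc ∫ t, n * t ^ n ∂μ ≤ ∫ t, 4 * diskKernel (1 - 1 / n) t ∂μ :=
        integral_mono_ae ((integrable_pow_of_ae_mem_Icc hμ n).const_mul _)
          ((integrable_diskKernel hμ hr0 hr1).const_mul _)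
          (hμ.mono fun t ht => nat_mul_pow_le_diskKernel hn ht)
    _ ≤ 4 * C := by rw [integral_const_mul]; linarith [hC _ hr0 hr1]

lemma hasSum_integral_diskKernel (hμ : ∀ᵐ t ∂μ, t ∈ Set.Icc (0 : ℝ) 1) {r : ℝ} (hr0 : 0 ≤ r)
    (hr1 : r < 1) :
    HasSum (fun n : ℕ => (1 - r ^ 2) * (n + 1) * r ^ n * ∫ t, t ^ n ∂μ)
      (∫ t, diskKernel r t ∂μ) := by
  have h1r : 0 ≤ 1 - r ^ 2 := by nlinarith
  have hterm (n : ℕ) : Integrable (fun t => (1 - r ^ 2) * (n + 1) * r ^ n * t ^ n) μ :=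
    (integrable_pow_of_ae_mem_Icc hμ n).const_mul _
  have hnorm (n : ℕ) : ∫ t, ‖(1 - r ^ 2) * (n + 1) * r ^ n * t ^ n‖ ∂μ
      = (1 - r ^ 2) * (n + 1) * r ^ n * ∫ t, t ^ n ∂μ := by
    rw [← integral_const_mul]
    refine integral_congr_ae (hμ.mono fun t ht => Real.norm_of_nonneg ?_)
    exact mul_nonneg (by positivity) (pow_nonneg ht.1 n)
  have hsum : Summable (fun n : ℕ => (1 - r ^ 2) * (n + 1) * r ^ n * ∫ t, t ^ n ∂μ) := by
    have hgeom := (hasSum_diskKernel (t := 1) (by rwa [mul_one, abs_of_nonneg hr0])).summable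
    refine Summable.of_nonneg_of_le (fun n => ?_) (fun n => ?_)
      (hgeom.mul_right (μ.real Set.univ))
    · rw [← hnorm]; exact integral_nonneg fun _ => norm_nonneg _
    · simp only [one_pow, mul_one]
      exact mul_le_mul_of_nonneg_left (moment_le_measureReal hμ n) (by positivity)
  have h := hasSum_integral_of_summable_integral_norm hterm (by simpa only [hnorm] using hsum)
  simp only [integral_const_mul] at h
  rwa [integral_congr_ae (hμ.mono fun t ht => (hasSum_diskKernel (r := r) (t := t)
    (by rw [abs_mul, abs_of_nonneg hr0, abs_of_nonneg ht.1]; nlinarith [ht.2])).tsum_eq)] at h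

lemma integral_diskKernel_le_of_moment_le (hμ : ∀ᵐ t ∂μ, t ∈ Set.Icc (0 : ℝ) 1) {K : ℝ}
    (hK : ∀ n : ℕ, (n + 1) * ∫ t, t ^ n ∂μ ≤ K) {r : ℝ} (hr0 : 0 ≤ r) (hr1 : r < 1) :
    ∫ t, diskKernel r t ∂μ ≤ 2 * K := by
  have hK0 : 0 ≤ K := by
    simpa using (integral_nonneg (μ := μ) fun _ => zero_le_one).trans (by simpa using hK 0)
  have h1r : 0 ≤ 1 - r ^ 2 := by nlinarith
  have hgeom := (hasSum_geometric_of_lt_one hr0 hr1).mul_left (K * (1 - r ^ 2))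
  calc ∫ t, diskKernel r t ∂μ ≤ K * (1 - r ^ 2) * (1 - r)⁻¹ :=
        hasSum_le (fun n => ?_) (hasSum_integral_diskKernel hμ hr0 hr1) hgeom
    _ = K * (1 + r) := by field_simp [(by linarith : (1 - r) ≠ 0)]; ring
    _ ≤ 2 * K := by nlinarith
  calc (1 - r ^ 2) * (n + 1) * r ^ n * ∫ t, t ^ n ∂μ
      = (1 - r ^ 2) * r ^ n * ((n + 1) * ∫ t, t ^ n ∂μ) := by ring
    _ ≤ (1 - r ^ 2) * r ^ n * K := by gcongr; exact hK n
    _ = K * (1 - r ^ 2) * r ^ n := by ring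

lemma succ_mul_moment_le_of_nat_mul_moment_le (hμ : ∀ᵐ t ∂μ, t ∈ Set.Icc (0 : ℝ) 1) {C : ℝ}
    (hC : ∀ n : ℕ, n * ∫ t, t ^ n ∂μ ≤ C) (n : ℕ) :
    (n + 1) * ∫ t, t ^ n ∂μ ≤ C + μ.real Set.univ := by
  rw [add_mul, one_mul]
  exact add_le_add (hC n) (moment_le_measureReal hμ n)

lemma norm_integral_kernel_le_integral_diskKernel (hμ : ∀ᵐ t ∂μ, t ∈ Set.Icc (0 : ℝ) 1) {w : ℂ}
    (hw : ‖w‖ < 1) :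
    ‖∫ t, (((1 - ‖w‖ ^ 2 : ℝ) : ℂ) / (1 - (starRingEnd ℂ) w * (t : ℂ)) ^ 2) ∂μ‖
      ≤ ∫ t, diskKernel ‖w‖ t ∂μ := by
  refine norm_integral_le_of_norm_le (integrable_diskKernel hμ (norm_nonneg w) hw)
    (hμ.mono fun t ht => ?_)
  have hnum : 0 ≤ 1 - ‖w‖ ^ 2 := by nlinarith [norm_nonneg w]
  have hpos : 0 < 1 - ‖w‖ * t := by nlinarith [norm_nonneg w, ht.1, ht.2]
  have hle : 1 - ‖w‖ * t ≤ ‖1 - (starRingEnd ℂ) w * (t : ℂ)‖ := by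
    simpa [abs_of_nonneg ht.1] using norm_sub_norm_le (1 : ℂ) ((starRingEnd ℂ) w * t)
  rw [norm_div, norm_pow, Complex.norm_real, Real.norm_of_nonneg hnum]
  exact div_le_div_of_nonneg_left hnum (by positivity) (pow_le_pow_left₀ hpos.le hle 2)

end Measure

/-- For a positive finite Borel measure `μ` on `[0,1)`,
`sup_{w∈𝔻} |∫₀¹ (1-|w|²)/(1-w̄t)² dμ(t)| < ∞` iff `μ[n] = O(1/n)`. -/
theorem statement14 (μ : Measure ℝ) [IsFiniteMeasure μ]
    (hsupp : ∀ᵐ t ∂μ, t ∈ Set.Ico (0 : ℝ) 1) :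
    (∃ C : ℝ, ∀ w ∈ Metric.ball (0 : ℂ) 1,
        ‖∫ t, (((1 - ‖w‖ ^ 2 : ℝ) : ℂ) / (1 - (starRingEnd ℂ) w * (t : ℂ)) ^ 2) ∂μ‖ ≤ C)
      ↔ ∃ C : ℝ, ∀ n : ℕ, (n : ℝ) * ∫ t, t ^ n ∂μ ≤ C := by
  have hμ : ∀ᵐ t ∂μ, t ∈ Set.Icc (0 : ℝ) 1 := hsupp.mono fun _ ht => Set.Ico_subset_Icc_self ht
  constructor
  · rintro ⟨C, hC⟩
    refine ⟨4 * C, nat_mul_moment_le_of_integral_diskKernel_le hμ fun r hr0 hr1 => ?_⟩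
    have hr := hC r (by simpa [abs_of_nonneg hr0] using hr1)
    rw [integral_kernel_ofReal, Complex.norm_real, Real.norm_eq_abs] at hr
    exact (le_abs_self _).trans hr
  · rintro ⟨C, hC⟩
    refine ⟨2 * (C + μ.real Set.univ), fun w hw => ?_⟩
    rw [mem_ball_zero_iff] at hw
    exact (norm_integral_kernel_le_integral_diskKernel hμ hw).trans
      (integral_diskKernel_le_of_moment_le hμ (succ_mul_moment_le_of_nat_mul_moment_le hμ hC)
        (norm_nonneg w) hw)
end

section
/- Let μ be a positive Borel measure on [0,1). Then μ is a Carleson measure on 𝔻 if and only if μ([t,1)) = O(1-t) as t → 1⁻, if and only if μ[n] = O(1/n). -/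
open MeasureTheory Complex Metric Real

/-- The Carleson box `S(I)` over the arc `I = {e^{iθ} : θ₀ ≤ θ ≤ θ₀ + ℓ}` of the unit
circle: `S(I) = {rζ : 1 - ℓ/(2π) < r < 1, ζ ∈ I}`. -/
def carlesonBox (θ₀ ℓ : ℝ) : Set ℂ :=
  {z : ℂ | 1 - ℓ / (2 * π) < ‖z‖ ∧ ‖z‖ < 1 ∧
    ∃ θ ∈ Set.Icc θ₀ (θ₀ + ℓ), z = (‖z‖ : ℂ) * Complex.exp (θ * Complex.I)}

/-- A positive measure `ν` on `𝔻` is a Carleson measure: `sup_I ν(S(I))/|I| < ∞`. -/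
def IsCarlesonMeasure (ν : Measure ℂ) : Prop :=
  ∃ C : ℝ, ∀ θ₀ ℓ : ℝ, 0 < ℓ → ℓ ≤ 2 * π →
    ν (carlesonBox θ₀ ℓ) ≤ ENNReal.ofReal (C * ℓ)

/-!
A Carleson box over an arc of length `ℓ` meets `[0,1)` only inside `(1 - ℓ/2π, 1)`, and the box
over the arc starting at `1` contains that interval; so the Carleson condition is the tail bound
`μ([t,1)) = O(1 - t)`. The tail bound gives the moment bound through the layer-cake formula
`μ[k+1] = ∫₀¹ (k+1) s^k μ([s,1)) ds ≤ C ∫₀¹ (k+1) s^k (1 - s) ds = C/(k+2)`. Conversely, for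
`n ≍ 1/(2(1-t))` Bernoulli's inequality gives `t^n ≥ 1/2`, hence
`μ([t,1)) ≤ 2 μ[n] = O(1/n) = O(1 - t)`.
-/

open Set

def HasLinearTailBound (μ : Measure ℝ) : Prop :=
  ∃ C : ℝ, ∀ t ∈ Ico (0 : ℝ) 1, μ (Ico t 1) ≤ ENNReal.ofReal (C * (1 - t))

def HasInvMomentBound (μ : Measure ℝ) : Prop :=
  ∃ C : ℝ, ∀ n : ℕ, (n : ℝ) * ∫ t, t ^ n ∂μ ≤ C

section

variable {μ : Measure ℝ}

theorem HasLinearTailBound.exists_nonneg (h : HasLinearTailBound μ) :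
    ∃ C, 0 ≤ C ∧ ∀ t ∈ Ico (0 : ℝ) 1, μ (Ico t 1) ≤ ENNReal.ofReal (C * (1 - t)) := by
  obtain ⟨C, hC⟩ := h
  refine ⟨max C 0, le_max_right _ _, fun t ht => (hC t ht).trans ?_⟩
  gcongr
  · linarith [ht.2]
  · exact le_max_left _ _

theorem hasLinearTailBound_of_le_near_one [IsFiniteMeasure μ] {t₀ C : ℝ} (ht₀ : t₀ < 1)
    (h : ∀ t ∈ Ico t₀ 1, μ (Ico t 1) ≤ ENNReal.ofReal (C * (1 - t))) :
    HasLinearTailBound μ := by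
  set M := μ.real univ
  refine ⟨max C 0 + M / (1 - t₀), fun t ht => ?_⟩
  have h1t : 0 ≤ 1 - t := by linarith [ht.2]
  have hM : 0 ≤ M / (1 - t₀) := div_nonneg measureReal_nonneg (by linarith)
  rcases le_or_gt t₀ t with ht₀t | htt₀
  · refine (h t ⟨ht₀t, ht.2⟩).trans (ENNReal.ofReal_le_ofReal ?_)
    nlinarith [le_max_left C 0]
  · calc μ (Ico t 1) ≤ μ univ := measure_mono (subset_univ _)
      _ = ENNReal.ofReal M := (ofReal_measureReal).symm
      _ ≤ ENNReal.ofReal ((max C 0 + M / (1 - t₀)) * (1 - t)) := by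
        refine ENNReal.ofReal_le_ofReal ?_
        have : M ≤ M / (1 - t₀) * (1 - t) := by
          rw [div_mul_eq_mul_div, le_div_iff₀ (by linarith)]
          exact mul_le_mul_of_nonneg_left (by linarith) measureReal_nonneg
        nlinarith [le_max_right C 0]

theorem measurableEmbedding_ofReal : MeasurableEmbedding ((↑) : ℝ → ℂ) :=
  Complex.isometry_ofReal.isClosedEmbedding.measurableEmbedding

theorem ofReal_mem_carlesonBox {ℓ t : ℝ} (hℓ : 0 ≤ ℓ) (ht₀ : 0 ≤ t)
    (ht : t ∈ Ioo (1 - ℓ / (2 * π)) 1) : (t : ℂ) ∈ carlesonBox 0 ℓ := by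
  have hnorm : ‖(t : ℂ)‖ = t := by rw [Complex.norm_real, Real.norm_of_nonneg ht₀]
  refine ⟨?_, ?_, 0, ⟨le_rfl, by simpa using hℓ⟩, ?_⟩ <;> rw [hnorm]
  exacts [ht.1, ht.2, by simp]

theorem hasLinearTailBound_of_isCarlesonMeasure [IsFiniteMeasure μ]
    (h : IsCarlesonMeasure (μ.map ((↑) : ℝ → ℂ))) : HasLinearTailBound μ := by
  obtain ⟨C, hC⟩ := h
  refine hasLinearTailBound_of_le_near_one (t₀ := 1 / 2) (C := 4 * π * C) (by norm_num)
    fun t ht => ?_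
  -- the box of side `4π(1 - t)` reaches down to radius `2t - 1 < t`
  have hℓ : 0 < 4 * π * (1 - t) := mul_pos (by positivity) (by linarith [ht.2])
  have hℓ' : 4 * π * (1 - t) ≤ 2 * π := by nlinarith [pi_pos, ht.1]
  have hsub : Ico t 1 ⊆ (↑) ⁻¹' carlesonBox 0 (4 * π * (1 - t)) := fun s hs =>
    ofReal_mem_carlesonBox hℓ.le (by linarith [hs.1, ht.1])
      ⟨by field_simp; linarith [hs.1, ht.2], hs.2⟩
  calc μ (Ico t 1) ≤ μ.map (↑) (carlesonBox 0 (4 * π * (1 - t))) := by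
        rw [measurableEmbedding_ofReal.map_apply]; exact measure_mono hsub
    _ ≤ ENNReal.ofReal (4 * π * C * (1 - t)) := by
        convert hC 0 _ hℓ hℓ' using 2; ring

theorem isCarlesonMeasure_of_hasLinearTailBound (hsupp : ∀ᵐ t ∂μ, t ∈ Ico (0 : ℝ) 1)
    (h : HasLinearTailBound μ) : IsCarlesonMeasure (μ.map ((↑) : ℝ → ℂ)) := by
  obtain ⟨C, hC₀, hC⟩ := h.exists_nonneg
  refine ⟨C, fun θ₀ ℓ hℓ hℓ' => ?_⟩
  have hs : ℓ / (2 * π) ∈ Ioc 0 1 :=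
    ⟨by positivity, (div_le_one (by positivity)).2 hℓ'⟩
  calc μ.map (↑) (carlesonBox θ₀ ℓ) = μ ((↑) ⁻¹' carlesonBox θ₀ ℓ) :=
        measurableEmbedding_ofReal.map_apply _ _
    _ ≤ μ (Ico (1 - ℓ / (2 * π)) 1) := by
        refine measure_mono_ae ?_
        filter_upwards [hsupp] with t ht hbox
        have hnorm : ‖(t : ℂ)‖ = t := by rw [Complex.norm_real, Real.norm_of_nonneg ht.1]
        have := hbox.1
        rw [hnorm] at this
        exact ⟨this.le, ht.2⟩
    _ ≤ ENNReal.ofReal (C * (1 - (1 - ℓ / (2 * π)))) :=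
        hC _ ⟨by linarith [hs.2], by linarith [hs.1]⟩
    _ ≤ ENNReal.ofReal (C * ℓ) := by
        refine ENNReal.ofReal_le_ofReal (mul_le_mul_of_nonneg_left ?_ hC₀)
        rw [sub_sub_cancel, div_le_iff₀ (by positivity)]
        nlinarith [pi_gt_three]

theorem integral_succ_mul_pow (k : ℕ) (x : ℝ) :
    ∫ t in (0 : ℝ)..x, (k + 1) * t ^ k = x ^ (k + 1) := by
  rw [intervalIntegral.integral_const_mul, integral_pow]
  field_simp
  simp

theorem integral_one_sub_mul_succ_mul_pow (k : ℕ) :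
    ∫ t in (0 : ℝ)..1, (1 - t) * ((k + 1) * t ^ k) = 1 / (k + 2) := by
  have hsplit (t : ℝ) :
      (1 - t) * ((k + 1) * t ^ k) = (k + 1) * t ^ k - (k + 1) * t ^ (k + 1) := by ring
  simp_rw [hsplit]
  rw [intervalIntegral.integral_sub
    ((by fun_prop : Continuous _).intervalIntegrable _ _)
    ((by fun_prop : Continuous _).intervalIntegrable _ _),
    intervalIntegral.integral_const_mul, intervalIntegral.integral_const_mul, integral_pow,
    integral_pow]
  push_cast
  field_simp
  ring

theorem integral_pow_succ_le_of_measure_Ici_le {C : ℝ} (hC : 0 ≤ C) (hnn : ∀ᵐ t ∂μ, 0 ≤ t)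
    (h : ∀ t > 0, μ (Ici t) ≤ ENNReal.ofReal (C * (1 - t))) (k : ℕ) :
    ∫ t, t ^ (k + 1) ∂μ ≤ C / (k + 2) := by
  set g : ℝ → ℝ := fun t => (k + 1) * t ^ k
  have hg : ∀ t > 0, 0 ≤ g t := fun t ht => by positivity
  have layercake := lintegral_comp_eq_lintegral_meas_le_mul μ hnn aemeasurable_id
    (g := g) (fun _ _ => (by fun_prop : Continuous g).intervalIntegrable _ _)
    ((ae_restrict_iff' measurableSet_Ioi).2 (ae_of_all _ hg))
  simp only [g, integral_succ_mul_pow] at layercake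
  rw [integral_eq_lintegral_of_nonneg_ae (by filter_upwards [hnn] with t ht; positivity)
    (by fun_prop)]
  refine ENNReal.toReal_le_of_le_ofReal (by positivity) ?_
  have hint : IntegrableOn (fun t => C * ((1 - t) * g t)) (Ioc 0 1) :=
    (by fun_prop : Continuous fun t => C * ((1 - t) * g t)).integrableOn_Ioc
  calc ∫⁻ t, ENNReal.ofReal (t ^ (k + 1)) ∂μ
      = ∫⁻ t in Ioi 0, μ (Ici t) * ENNReal.ofReal (g t) := layercake
    _ ≤ ∫⁻ t in Ioi 0, ENNReal.ofReal (C * ((1 - t) * g t)) := by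
        refine setLIntegral_mono' measurableSet_Ioi fun t ht => ?_
        rw [← mul_assoc, ENNReal.ofReal_mul' (hg t ht)]
        gcongr
        exact h t ht
    _ = ∫⁻ t in Ioc 0 1, ENNReal.ofReal (C * ((1 - t) * g t)) := by
        rw [← Ioc_union_Ioi_eq_Ioi zero_le_one,
          lintegral_union measurableSet_Ioi Ioc_disjoint_Ioi_same,
          setLIntegral_eq_zero measurableSet_Ioi, add_zero]
        intro t ht
        refine ENNReal.ofReal_eq_zero.2 (mul_nonpos_of_nonneg_of_nonpos hC ?_)
        exact mul_nonpos_of_nonpos_of_nonneg (by linarith [mem_Ioi.1 ht])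
          (hg t (zero_lt_one.trans ht))
    _ = ENNReal.ofReal (C / (k + 2)) := by
        rw [← ofReal_integral_eq_lintegral_ofReal hint, ← intervalIntegral.integral_of_le
          zero_le_one, intervalIntegral.integral_const_mul, integral_one_sub_mul_succ_mul_pow,
          mul_one_div]
        exact (ae_restrict_iff' measurableSet_Ioc).2 (ae_of_all _ fun t ht =>
          mul_nonneg hC (mul_nonneg (by linarith [ht.2]) (hg t ht.1)))

theorem hasInvMomentBound_of_hasLinearTailBound (hsupp : ∀ᵐ t ∂μ, t ∈ Ico (0 : ℝ) 1)
    (h : HasLinearTailBound μ) : HasInvMomentBound μ := by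
  obtain ⟨C, hC₀, hC⟩ := h.exists_nonneg
  have hIci : ∀ t > 0, μ (Ici t) ≤ ENNReal.ofReal (C * (1 - t)) := by
    intro t ht
    rcases lt_or_ge t 1 with ht1 | ht1
    · refine (measure_mono_ae ?_).trans (hC t ⟨ht.le, ht1⟩)
      filter_upwards [hsupp] with s hs hts using ⟨hts, hs.2⟩
    · refine (measure_mono_ae (t := ∅) ?_).trans (by simp)
      filter_upwards [hsupp] with s hs hts
      exact absurd hs.2 (not_lt.2 (ht1.trans hts))
  refine ⟨C, fun n => ?_⟩
  cases n with
  | zero => simpa using hC₀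
  | succ k =>
    have hk := integral_pow_succ_le_of_measure_Ici_le hC₀ (hsupp.mono fun t ht => ht.1) hIci k
    calc ((k + 1 : ℕ) : ℝ) * ∫ t, t ^ (k + 1) ∂μ ≤ (k + 1) * (C / (k + 2)) := by
          push_cast; gcongr
      _ ≤ C := by
          rw [mul_div_assoc', div_le_iff₀ (by positivity)]
          linarith

theorem exists_nat_mul_mem_Icc {δ : ℝ} (hδ : 0 < δ) (hδ' : δ ≤ 1 / 4) :
    ∃ n : ℕ, (n : ℝ) * δ ∈ Icc (1 / 4) (1 / 2) := by
  refine ⟨⌊1 / (2 * δ)⌋₊, ?_, ?_⟩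
  · have h := Nat.lt_floor_add_one (1 / (2 * δ))
    rw [div_lt_iff₀ (by positivity)] at h
    nlinarith
  · have h := Nat.floor_le (a := 1 / (2 * δ)) (by positivity)
    rw [le_div_iff₀ (by positivity)] at h
    linarith

theorem pow_mul_measureReal_Ico_le_integral_pow [IsFiniteMeasure μ]
    (hsupp : ∀ᵐ t ∂μ, t ∈ Ico (0 : ℝ) 1) {t : ℝ} (ht : 0 ≤ t) (n : ℕ) :
    t ^ n * μ.real (Ico t 1) ≤ ∫ s, s ^ n ∂μ := by
  have hint : Integrable (fun s : ℝ => s ^ n) μ := by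
    refine Integrable.mono' (integrable_const 1) (by fun_prop) ?_
    filter_upwards [hsupp] with s hs
    rw [norm_pow, Real.norm_of_nonneg hs.1]
    exact pow_le_one₀ hs.1 hs.2.le
  calc t ^ n * μ.real (Ico t 1) ≤ t ^ n * μ.real {s | t ^ n ≤ s ^ n} := by
        gcongr ?_ * ?_
        exact measureReal_mono fun s hs => pow_le_pow_left₀ ht hs.1 n
    _ ≤ ∫ s, s ^ n ∂μ :=
        mul_meas_ge_le_integral_of_nonneg (hsupp.mono fun s hs => pow_nonneg hs.1 n) hint _

theorem hasLinearTailBound_of_hasInvMomentBound [IsFiniteMeasure μ]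
    (hsupp : ∀ᵐ t ∂μ, t ∈ Ico (0 : ℝ) 1) (h : HasInvMomentBound μ) : HasLinearTailBound μ := by
  obtain ⟨C, hC⟩ := h
  have hC₀ : 0 ≤ C := by simpa using hC 0
  refine hasLinearTailBound_of_le_near_one (t₀ := 3 / 4) (C := 8 * C) (by norm_num)
    fun t ht => ?_
  obtain ⟨n, hn_lo, hn_hi⟩ := exists_nat_mul_mem_Icc (δ := 1 - t) (by linarith [ht.2])
    (by linarith [ht.1])
  have hn : (0 : ℝ) < n := pos_of_mul_pos_left (b := 1 - t) (by linarith) (by linarith [ht.2])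
  have hpow : 1 / 2 ≤ t ^ n := by
    have := one_add_mul_le_pow (a := t - 1) (by linarith [ht.1]) n
    rw [add_sub_cancel] at this
    linarith
  have hreal : μ.real (Ico t 1) ≤ 8 * C * (1 - t) := by
    calc μ.real (Ico t 1) ≤ 2 * (t ^ n * μ.real (Ico t 1)) := by
          nlinarith [measureReal_nonneg (μ := μ) (s := Ico t 1)]
      _ ≤ 2 * ∫ s, s ^ n ∂μ := by
          gcongr
          exact pow_mul_measureReal_Ico_le_integral_pow hsupp (by linarith [ht.1]) n
      _ ≤ 2 * (C / n) := by
          gcongr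
          rw [le_div_iff₀ hn]
          linarith [hC n]
      _ ≤ 8 * C * (1 - t) := by
          rw [mul_div_assoc', div_le_iff₀ hn]
          nlinarith
  rw [← ofReal_measureReal]
  exact ENNReal.ofReal_le_ofReal hreal

end

/-- For a positive finite Borel measure `μ` on `[0,1)` (viewed on `𝔻`):
`μ` is a Carleson measure iff `μ([t,1)) = O(1-t)`, iff `μ[n] = O(1/n)`. -/
theorem statement16 (μ : Measure ℝ) [IsFiniteMeasure μ]
    (hsupp : ∀ᵐ t ∂μ, t ∈ Set.Ico (0 : ℝ) 1) :
    (IsCarlesonMeasure (Measure.map (fun t : ℝ => (t : ℂ)) μ)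
        ↔ ∃ C : ℝ, ∀ t ∈ Set.Ico (0 : ℝ) 1, μ (Set.Ico t 1) ≤ ENNReal.ofReal (C * (1 - t)))
    ∧ ((∃ C : ℝ, ∀ t ∈ Set.Ico (0 : ℝ) 1, μ (Set.Ico t 1) ≤ ENNReal.ofReal (C * (1 - t)))
        ↔ ∃ C : ℝ, ∀ n : ℕ, (n : ℝ) * ∫ t, t ^ n ∂μ ≤ C) :=
  ⟨⟨hasLinearTailBound_of_isCarlesonMeasure, isCarlesonMeasure_of_hasLinearTailBound hsupp⟩,
    ⟨hasInvMomentBound_of_hasLinearTailBound hsupp, hasLinearTailBound_of_hasInvMomentBound hsupp⟩⟩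
end

section
/- Let μ be a positive Borel measure on [0,1). Then μ satisfies sup_{w∈𝔻} ∫_0^1 (1-|w|²)/|1 - w̄ t|² dμ(t) < ∞ if and only if sup_{w∈𝔻} |∫_0^1 (1-|w|²)/(1 - w̄ t)² dμ(t)| < ∞; that is, for measures on [0,1) the Carleson-type condition with modulus inside is equivalent to the Hankel-type condition with modulus outside. -/
open MeasureTheory Complex Metric

/-!
Modulus outside is always dominated by modulus inside. Conversely, for `t ∈ [0,1)` one has
`|1 - w̄ t| ≥ 1 - |w| t`, so the Carleson kernel at `w` is dominated by the Hankel kernel at the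
real point `|w|`; there the Hankel kernel is positive, and its integral equals its modulus.
-/

lemma one_sub_norm_mul_le_norm_one_sub_conj_mul (w : ℂ) {t : ℝ} (ht : 0 ≤ t) :
    1 - ‖w‖ * t ≤ ‖1 - starRingEnd ℂ w * (t : ℂ)‖ := by
  have h : ‖starRingEnd ℂ w * (t : ℂ)‖ = ‖w‖ * t := by
    rw [norm_mul, RCLike.norm_conj, Complex.norm_real, Real.norm_of_nonneg ht]
  calc 1 - ‖w‖ * t = ‖(1 : ℂ)‖ - ‖starRingEnd ℂ w * (t : ℂ)‖ := by rw [h, norm_one]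
    _ ≤ _ := norm_sub_norm_le _ _

lemma carleson_kernel_le_real_hankel_kernel {w : ℂ} (hw : ‖w‖ < 1) {t : ℝ}
    (ht : t ∈ Set.Ico (0 : ℝ) 1) :
    (1 - ‖w‖ ^ 2) / ‖1 - starRingEnd ℂ w * (t : ℂ)‖ ^ 2 ≤ (1 - ‖w‖ ^ 2) / (1 - ‖w‖ * t) ^ 2 := by
  have hnum : 0 ≤ 1 - ‖w‖ ^ 2 := by nlinarith [norm_nonneg w]
  have hpos : 0 < 1 - ‖w‖ * t := by nlinarith [norm_nonneg w, ht.1, ht.2]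
  have hle := one_sub_norm_mul_le_norm_one_sub_conj_mul w ht.1
  exact div_le_div_of_nonneg_left hnum (by positivity) (by gcongr)

lemma real_hankel_kernel_le {r : ℝ} (hr0 : 0 ≤ r) (hr1 : r < 1) {t : ℝ}
    (ht : t ∈ Set.Ico (0 : ℝ) 1) :
    (1 - r ^ 2) / (1 - r * t) ^ 2 ≤ (1 - r ^ 2) / (1 - r) ^ 2 := by
  have hnum : 0 ≤ 1 - r ^ 2 := by nlinarith
  have h : 1 - r ≤ 1 - r * t := by nlinarith [ht.2]
  exact div_le_div_of_nonneg_left hnum (by nlinarith) (by gcongr)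

lemma integrable_real_hankel_kernel {μ : Measure ℝ} [IsFiniteMeasure μ]
    (hsupp : ∀ᵐ t ∂μ, t ∈ Set.Ico (0 : ℝ) 1) {r : ℝ} (hr0 : 0 ≤ r) (hr1 : r < 1) :
    Integrable (fun t => (1 - r ^ 2) / (1 - r * t) ^ 2) μ := by
  refine (integrable_const ((1 - r ^ 2) / (1 - r) ^ 2)).mono' (by fun_prop : Measurable _).aestronglyMeasurable ?_
  filter_upwards [hsupp] with t ht
  have hnum : 0 ≤ 1 - r ^ 2 := by nlinarith
  rw [Real.norm_of_nonneg (by positivity)]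
  exact real_hankel_kernel_le hr0 hr1 ht

lemma integral_hankel_kernel_ofReal (μ : Measure ℝ) {r : ℝ} (hr0 : 0 ≤ r) :
    ∫ t, ((1 - ‖(r : ℂ)‖ ^ 2 : ℝ) : ℂ) / (1 - starRingEnd ℂ (r : ℂ) * (t : ℂ)) ^ 2 ∂μ
      = ((∫ t, (1 - r ^ 2) / (1 - r * t) ^ 2 ∂μ : ℝ) : ℂ) := by
  rw [← integral_complex_ofReal]
  congr 1 with t
  rw [Complex.norm_real, Real.norm_of_nonneg hr0, Complex.conj_ofReal]
  push_cast
  rfl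

lemma norm_integral_hankel_kernel_le (μ : Measure ℝ) {w : ℂ} (hw : ‖w‖ ≤ 1) :
    ‖∫ t, ((1 - ‖w‖ ^ 2 : ℝ) : ℂ) / (1 - starRingEnd ℂ w * (t : ℂ)) ^ 2 ∂μ‖
      ≤ ∫ t, (1 - ‖w‖ ^ 2) / ‖1 - starRingEnd ℂ w * (t : ℂ)‖ ^ 2 ∂μ := by
  have hnum : 0 ≤ 1 - ‖w‖ ^ 2 := by nlinarith [norm_nonneg w]
  refine (norm_integral_le_integral_norm _).trans_eq (integral_congr_ae ?_)
  filter_upwards with t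
  simp only [norm_div, norm_pow, Complex.norm_real, Real.norm_of_nonneg hnum]

lemma integral_carleson_kernel_le_norm_integral_hankel_kernel {μ : Measure ℝ} [IsFiniteMeasure μ]
    (hsupp : ∀ᵐ t ∂μ, t ∈ Set.Ico (0 : ℝ) 1) {w : ℂ} (hw : ‖w‖ < 1) :
    ∫ t, (1 - ‖w‖ ^ 2) / ‖1 - starRingEnd ℂ w * (t : ℂ)‖ ^ 2 ∂μ
      ≤ ‖∫ t, ((1 - ‖(‖w‖ : ℂ)‖ ^ 2 : ℝ) : ℂ) /
          (1 - starRingEnd ℂ (‖w‖ : ℂ) * (t : ℂ)) ^ 2 ∂μ‖ := by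
  have hnum : 0 ≤ 1 - ‖w‖ ^ 2 := by nlinarith [norm_nonneg w]
  rw [integral_hankel_kernel_ofReal μ (norm_nonneg w), Complex.norm_real, Real.norm_eq_abs]
  refine (integral_mono_of_nonneg ?_ (integrable_real_hankel_kernel hsupp (norm_nonneg w) hw)
    ?_).trans (le_abs_self _)
  · filter_upwards with t
    positivity
  · filter_upwards [hsupp] with t ht
    exact carleson_kernel_le_real_hankel_kernel hw ht

/-- For a positive finite Borel measure `μ` on `[0,1)`, the Carleson-type
condition `sup_{w∈𝔻} ∫₀¹ (1-|w|²)/|1-w̄t|² dμ(t) < ∞` (modulus inside) is equivalent to the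
Hankel-type condition `sup_{w∈𝔻} |∫₀¹ (1-|w|²)/(1-w̄t)² dμ(t)| < ∞` (modulus outside). -/
theorem statement17 (μ : Measure ℝ) [IsFiniteMeasure μ]
    (hsupp : ∀ᵐ t ∂μ, t ∈ Set.Ico (0 : ℝ) 1) :
    (∃ C : ℝ, ∀ w ∈ Metric.ball (0 : ℂ) 1,
        (∫ t, (1 - ‖w‖ ^ 2) / ‖1 - (starRingEnd ℂ) w * (t : ℂ)‖ ^ 2 ∂μ) ≤ C)
      ↔ ∃ C : ℝ, ∀ w ∈ Metric.ball (0 : ℂ) 1,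
        ‖∫ t, (((1 - ‖w‖ ^ 2 : ℝ) : ℂ) / (1 - (starRingEnd ℂ) w * (t : ℂ)) ^ 2) ∂μ‖ ≤ C := by
  constructor
  · rintro ⟨C, hC⟩
    refine ⟨C, fun w hw => (norm_integral_hankel_kernel_le μ ?_).trans (hC w hw)⟩
    exact (mem_ball_zero_iff.mp hw).le
  · rintro ⟨C, hC⟩
    refine ⟨C, fun w hw => ?_⟩
    have hw1 : ‖w‖ < 1 := mem_ball_zero_iff.mp hw
    have hr : (‖w‖ : ℂ) ∈ Metric.ball (0 : ℂ) 1 := by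
      rwa [mem_ball_zero_iff, Complex.norm_real, Real.norm_of_nonneg (norm_nonneg w)]
    exact (integral_carleson_kernel_le_norm_integral_hankel_kernel hsupp hw1).trans (hC _ hr)
end
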